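/- Let z : ℕ → {0,…,M} be a fixed delay sequence and let t ≥ 1 satisfy z_t > 0. For every history-dependent randomized policy π and all s, s' ∈ S and a, a' ∈ A such that the conditioning events have positive P^π_z-probability: P^π_z(s̃_t = s' | ã_t = a', s̃_{t−1} = s, ã_{t−1} = a) = P^π_z(s̃_t = s' | s̃_{t−1} = s, ã_{t−1} = a) = P(s, a)(s'). That is, when the delay at time t is positive, the state s̃_t is conditionally independent of the action ã_t executed at time t, given (s̃_{t−1}, ã_{t−1}). -/

import Mathlib

open scoped ENNReal

/-! ## Stochastic execution-delay MDP with a fixed (observed) delay sequence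

`S` and `A` are the finite state and action spaces, `P : S → A → PMF S` is the
transition kernel, `μ : PMF S` the initial distribution, `M ≥ 1` the delay bound,
`abar` the default action queue (only indices `< M` are ever used), and
`z : ℕ → {0,…,M}` a fixed delay sequence.  `P^π_z` denotes the process law with
these deterministic delays. -/

/-- Effective decision time `τ_t(z)`: the largest `t' ≤ t` with `t' + z t' ≤ t`. -/
def tau (z : ℕ → ℕ) (t : ℕ) : ℕ := Nat.findGreatest (fun t' => t' + z t' ≤ t) t

theorem tau_le (z : ℕ → ℕ) (t : ℕ) : tau z t ≤ t := Nat.findGreatest_le t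

/-- Switch time `t_z = min {z 0, 1 + z 1, …, (M-1) + z (M-1)}`. -/
noncomputable def switchTime (M : ℕ) (z : ℕ → ℕ) : ℕ := sInf {x | ∃ t' < M, t' + z t' = x}

/-- A history-dependent randomized policy (for a fixed, observed delay sequence):
at time `t` it maps the history `(s 0, …, s t, a 0, …, a (t-1))` to a distribution
over actions.  It is encoded on whole sequences, together with `IsCausal`. -/
def IsCausal {S A : Type*} (π : ℕ → (ℕ → S) → (ℕ → A) → PMF A) : Prop :=
  ∀ (t : ℕ) (s s' : ℕ → S) (a a' : ℕ → A),
    (∀ i ≤ t, s i = s' i) → (∀ j < t, a j = a' j) → π t s a = π t s' a'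

/-- The probability that the action executed at time `t` is `a t`, given the history:
if `t < min {z 0, 1 + z 1, …, t + z t}` the default action `abar t` is executed
deterministically; otherwise the action is drawn from `π (τ_t) (h (τ_t))`. -/
noncomputable def actProb {S A : Type*} [DecidableEq A] (abar : ℕ → A)
    (π : ℕ → (ℕ → S) → (ℕ → A) → PMF A) (z : ℕ → ℕ)
    (t : ℕ) (s : ℕ → S) (a : ℕ → A) : ℝ≥0∞ :=
  if t < sInf {x | ∃ t' ≤ t, t' + z t' = x} then (if a t = abar t then 1 else 0)
  else π (tau z t) s a (a t)

/-- `P^π_z`-probability of the prefix `(s 0, a 0, …, s t, a t)`. -/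
noncomputable def pathProb {S A : Type*} [DecidableEq A] (P : S → A → PMF S)
    (μ : PMF S) (abar : ℕ → A) (π : ℕ → (ℕ → S) → (ℕ → A) → PMF A) (z : ℕ → ℕ)
    (t : ℕ) (s : ℕ → S) (a : ℕ → A) : ℝ≥0∞ :=
  μ (s 0) * (∏ k ∈ Finset.range (t + 1), actProb abar π z k s a)
    * (∏ k ∈ Finset.range t, P (s k) (a k) (s (k + 1)))

/-- Extension of a finite vector by a default value. -/
def ext {X : Type*} [Inhabited X] {n : ℕ} (v : Fin n → X) : ℕ → X :=
  fun i => if h : i < n then v ⟨i, h⟩ else default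

open Classical in
/-- `P^π_z`-probability of an event `E` on `(s̃ 0, …, s̃ t, ã 0, …, ã t)`. -/
noncomputable def eventProb {S A : Type*} [Fintype S] [Inhabited S] [Fintype A]
    [DecidableEq A] [Inhabited A] (P : S → A → PMF S) (μ : PMF S)
    (abar : ℕ → A) (π : ℕ → (ℕ → S) → (ℕ → A) → PMF A) (z : ℕ → ℕ)
    (t : ℕ) (E : (Fin (t + 1) → S) → (Fin (t + 1) → A) → Prop) : ℝ≥0∞ :=
  ∑ v : Fin (t + 1) → S, ∑ w : Fin (t + 1) → A,
    if E v w then pathProb P μ abar π z t (ext v) (ext w) else 0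

/-! With `z t > 0` every step `k ≤ t` has effective decision time `τ_k < t`, so no action up to
time `t` depends on `s̃ t`. As a function of its last state, the probability of a path up to time
`t` is therefore a weight not involving `s̃ t` times the transition probability
`P (s̃ (t-1)) (ã (t-1)) (s̃ t)`, which sums to one over `s̃ t`. On any event that fixes
`s̃ (t-1) = s`, `ã (t-1) = a` and does not involve `s̃ t` (such as `ã t = a'`), the joint
probability with `s̃ t = s'` is thus `P s a s'` times the probability of the event. -/

theorem PMF.sum_coe {α : Type*} [Fintype α] (p : PMF α) : ∑ a, p a = 1 := by
  rw [← tsum_fintype (L := .unconditional _), p.tsum_coe]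

theorem tau_lt_self {z : ℕ → ℕ} {t : ℕ} (ht : t ≠ 0) (hzt : 0 < z t) : tau z t < t := by
  refine (tau_le z t).lt_of_ne fun h => ?_
  have := (Nat.findGreatest_eq_iff.mp h).2.1 ht
  omega

section Ext

variable {X : Type*} [Inhabited X] {n : ℕ}

theorem ext_of_lt (v : Fin n → X) {i : ℕ} (h : i < n) : ext v i = v ⟨i, h⟩ :=
  dif_pos h

theorem ext_snoc_of_lt (u : Fin n → X) (x : X) {i : ℕ} (h : i < n) :
    ext (Fin.snoc u x) i = u ⟨i, h⟩ :=
  (ext_of_lt _ (Nat.lt_succ_of_lt h)).trans (Fin.snoc_castSucc (i := ⟨i, h⟩) ..)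

theorem ext_snoc_self (u : Fin n → X) (x : X) : ext (Fin.snoc u x) n = x :=
  (ext_of_lt _ n.lt_succ_self).trans (Fin.snoc_last ..)

theorem ext_snoc_eq_update (u : Fin n → X) (x y : X) :
    ext (Fin.snoc u x) = Function.update (ext (Fin.snoc u y)) n x := by
  funext i
  rcases lt_trichotomy i n with h | rfl | h
  · rw [Function.update_of_ne h.ne, ext_snoc_of_lt u x h, ext_snoc_of_lt u y h]
  · rw [Function.update_self, ext_snoc_self]
  · rw [Function.update_of_ne h.ne', ext, ext, dif_neg (by omega), dif_neg (by omega)]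

end Ext

section Paths

variable {S A : Type*} [DecidableEq A] (P : S → A → PMF S) (μ : PMF S) (abar : ℕ → A)
  (π : ℕ → (ℕ → S) → (ℕ → A) → PMF A) (z : ℕ → ℕ)

theorem actProb_le_one (k : ℕ) (s : ℕ → S) (a : ℕ → A) : actProb abar π z k s a ≤ 1 := by
  unfold actProb
  split_ifs
  exacts [le_rfl, zero_le_one, PMF.coe_le_one _ _]

theorem pathProb_le_one (t : ℕ) (s : ℕ → S) (a : ℕ → A) : pathProb P μ abar π z t s a ≤ 1 :=
  mul_le_one' (mul_le_one' (PMF.coe_le_one _ _)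
      (Finset.prod_le_one' fun _ _ => actProb_le_one ..))
    (Finset.prod_le_one' fun _ _ => PMF.coe_le_one _ _)

variable {π}

theorem actProb_congr_of_eq_le_tau (hπ : IsCausal π) {k : ℕ} {s s' : ℕ → S} (a : ℕ → A)
    (h : ∀ i ≤ tau z k, s i = s' i) : actProb abar π z k s a = actProb abar π z k s' a := by
  simp only [actProb, hπ _ s s' a a h fun _ _ => rfl]

theorem exists_pathProb_update_eq_mul (hπ : IsCausal π) {t : ℕ} (ht : 1 ≤ t) (hzt : 0 < z t)
    (s : ℕ → S) (a : ℕ → A) :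
    ∃ C, ∀ x, pathProb P μ abar π z t (Function.update s t x) a
      = C * P (s (t - 1)) (a (t - 1)) x := by
  obtain ⟨m, rfl⟩ := Nat.exists_eq_add_of_le' ht
  have htau : ∀ k ∈ Finset.range (m + 2), tau z k < m + 1 := fun k hk => by
    rcases (Nat.lt_succ_iff.mp (Finset.mem_range.mp hk)).lt_or_eq with hk | rfl
    · exact (tau_le z k).trans_lt hk
    · exact tau_lt_self m.succ_ne_zero hzt
  refine ⟨μ (s 0) * (∏ k ∈ Finset.range (m + 2), actProb abar π z k s a)
    * ∏ k ∈ Finset.range m, P (s k) (a k) (s (k + 1)), fun x => ?_⟩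
  rw [pathProb, Finset.prod_range_succ (M := ℝ≥0∞) _ m, ← mul_assoc, Nat.add_sub_cancel,
    Function.update_self, Function.update_of_ne (by omega), Function.update_of_ne (by omega)]
  congr 2
  · refine congrArg _ (Finset.prod_congr rfl fun k hk => ?_)
    refine actProb_congr_of_eq_le_tau abar z hπ a fun i hi => Function.update_of_ne ?_ ..
    have := htau k hk
    omega
  · refine Finset.prod_congr rfl fun k hk => ?_
    have := Finset.mem_range.mp hk
    rw [Function.update_of_ne (by omega), Function.update_of_ne (by omega)]

theorem sum_pathProb_update_mul [Fintype S] (hπ : IsCausal π) {t : ℕ} (ht : 1 ≤ t)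
    (hzt : 0 < z t) (s : ℕ → S) (a : ℕ → A) (y : S) :
    (∑ x, pathProb P μ abar π z t (Function.update s t x) a) * P (s (t - 1)) (a (t - 1)) y
      = pathProb P μ abar π z t (Function.update s t y) a := by
  obtain ⟨C, hC⟩ := exists_pathProb_update_eq_mul P μ abar z hπ ht hzt s a
  simp only [hC, ← Finset.mul_sum, PMF.sum_coe, mul_one]

end Paths

section Events

variable {S A : Type*} [Fintype S] [Inhabited S] [Fintype A] [DecidableEq A] [Inhabited A]
  (P : S → A → PMF S) (μ : PMF S) (abar : ℕ → A) (z : ℕ → ℕ)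

theorem eventProb_ne_top (π : ℕ → (ℕ → S) → (ℕ → A) → PMF A) (t : ℕ)
    (E : (Fin (t + 1) → S) → (Fin (t + 1) → A) → Prop) : eventProb P μ abar π z t E ≠ ⊤ :=
  ENNReal.sum_ne_top.2 fun _ _ => ENNReal.sum_ne_top.2 fun _ _ => by
    split_ifs
    exacts [ne_top_of_le_ne_top ENNReal.one_ne_top (pathProb_le_one ..), ENNReal.zero_ne_top]

open Classical in
theorem eventProb_eq_sum_snoc (π : ℕ → (ℕ → S) → (ℕ → A) → PMF A) (t : ℕ)
    (E : (Fin (t + 1) → S) → (Fin (t + 1) → A) → Prop) :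
    eventProb P μ abar π z t E = ∑ u : Fin t → S, ∑ w, ∑ x,
      if E (Fin.snoc u x) w then pathProb P μ abar π z t (ext (Fin.snoc u x)) (ext w) else 0 := by
  rw [eventProb, ← (Fin.snocEquiv fun _ => S).sum_comp, Fintype.sum_prod_type, Finset.sum_comm]
  exact Finset.sum_congr rfl fun u _ => Finset.sum_comm

variable {π : ℕ → (ℕ → S) → (ℕ → A) → PMF A}

open Classical in
theorem eventProb_last_state_eq_mul (hπ : IsCausal π) {t : ℕ} (ht : 1 ≤ t) (hzt : 0 < z t)
    (s s' : S) (a : A) (Q : (Fin t → S) → (Fin (t + 1) → A) → Prop)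
    (hQ : ∀ u w, Q u w → u ⟨t - 1, Nat.sub_one_lt_of_le ht le_rfl⟩ = s ∧
      w ⟨t - 1, Nat.sub_one_lt_of_le ht t.le_succ⟩ = a) :
    eventProb P μ abar π z t (fun v w => v (Fin.last t) = s' ∧ Q (Fin.init v) w)
      = P s a s' * eventProb P μ abar π z t (fun v w => Q (Fin.init v) w) := by
  simp only [eventProb_eq_sum_snoc, Fin.snoc_last, Fin.init_snoc, Finset.mul_sum]
  refine Finset.sum_congr rfl fun u _ => Finset.sum_congr rfl fun w _ => ?_
  by_cases hQuw : Q u w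
  · obtain ⟨rfl, rfl⟩ := hQ u w hQuw
    have key := sum_pathProb_update_mul P μ abar z hπ ht hzt (ext (Fin.snoc u default)) (ext w) s'
    rw [ext_snoc_of_lt u _ (by omega), ext_of_lt w (by omega)] at key
    simp only [← ext_snoc_eq_update] at key
    simp only [hQuw, and_true, if_true, Finset.sum_ite_eq', Finset.mem_univ]
    rw [← key, ← Finset.mul_sum, mul_comm]
  · simp [hQuw]

theorem eventProb_last_state_div (hπ : IsCausal π) {t : ℕ} (ht : 1 ≤ t) (hzt : 0 < z t)
    (s s' : S) (a : A) (Q : (Fin t → S) → (Fin (t + 1) → A) → Prop)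
    (hQ : ∀ u w, Q u w → u ⟨t - 1, Nat.sub_one_lt_of_le ht le_rfl⟩ = s ∧
      w ⟨t - 1, Nat.sub_one_lt_of_le ht t.le_succ⟩ = a)
    (hpos : 0 < eventProb P μ abar π z t (fun v w => Q (Fin.init v) w)) :
    eventProb P μ abar π z t (fun v w => v (Fin.last t) = s' ∧ Q (Fin.init v) w)
      / eventProb P μ abar π z t (fun v w => Q (Fin.init v) w) = P s a s' := by
  rw [eventProb_last_state_eq_mul P μ abar z hπ ht hzt s s' a Q hQ,
    ENNReal.mul_div_cancel_right hpos.ne' (eventProb_ne_top P μ abar z π t _)]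

end Events

/-- Let `z` be a fixed delay sequence and `t ≥ 1` with `z t > 0`.
For every history-dependent randomized policy `π` and all `s s' : S`, `a a' : A`
such that the conditioning events have positive `P^π_z`-probability:
`P^π_z(s̃ t = s' | ã t = a', s̃ (t-1) = s, ã (t-1) = a)
  = P^π_z(s̃ t = s' | s̃ (t-1) = s, ã (t-1) = a) = P s a s'`:
when the delay at time `t` is positive, the state `s̃ t` is conditionally independent
of the action executed at time `t`, given `(s̃ (t-1), ã (t-1))`. -/
theorem statement5 {S A : Type*} [Fintype S] [Inhabited S] [Fintype A]
    [DecidableEq A] [Inhabited A]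
    (P : S → A → PMF S) (μ : PMF S) (abar : ℕ → A)
    (z : ℕ → ℕ)
    (π : ℕ → (ℕ → S) → (ℕ → A) → PMF A) (hπ : IsCausal π)
    (t : ℕ) (ht : 1 ≤ t) (hzt : 0 < z t) (s s' : S) (a a' : A)
    (h1 : 0 < eventProb P μ abar π z t (fun v w =>
        w (Fin.last t) = a' ∧ v ⟨t - 1, by omega⟩ = s ∧ w ⟨t - 1, by omega⟩ = a))
    (h2 : 0 < eventProb P μ abar π z t (fun v w =>
        v ⟨t - 1, by omega⟩ = s ∧ w ⟨t - 1, by omega⟩ = a)) :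
    eventProb P μ abar π z t (fun v w =>
        v (Fin.last t) = s' ∧ w (Fin.last t) = a' ∧
          v ⟨t - 1, by omega⟩ = s ∧ w ⟨t - 1, by omega⟩ = a)
      / eventProb P μ abar π z t (fun v w =>
        w (Fin.last t) = a' ∧ v ⟨t - 1, by omega⟩ = s ∧ w ⟨t - 1, by omega⟩ = a)
      = P s a s' ∧
    eventProb P μ abar π z t (fun v w =>
        v (Fin.last t) = s' ∧ v ⟨t - 1, by omega⟩ = s ∧ w ⟨t - 1, by omega⟩ = a)
      / eventProb P μ abar π z t (fun v w =>
        v ⟨t - 1, by omega⟩ = s ∧ w ⟨t - 1, by omega⟩ = a)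
      = P s a s' := by
  exact ⟨eventProb_last_state_div P μ abar z hπ ht hzt s s' a
      (fun u w => w (Fin.last t) = a' ∧ u ⟨t - 1, by omega⟩ = s ∧ w ⟨t - 1, by omega⟩ = a)
      (fun _ _ h => h.2) h1,
    eventProb_last_state_div P μ abar z hπ ht hzt s s' a
      (fun u w => u ⟨t - 1, by omega⟩ = s ∧ w ⟨t - 1, by omega⟩ = a) (fun _ _ h => h) h2⟩
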